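/- arXiv:1905.05917 — 11 statements merged into one kernel-verified Lean document; each statement's English description precedes it below -/
import Mathlib

section
/- For every real number x with x ≥ −2/3, it holds that exp(x − x²) ≤ 1 + x. -/
theorem exp_sub_sq_le_one_add (x : ℝ) (hx : x ≥ -2/3) :
    Real.exp (x - x^2) ≤ 1 + x := by
  have key : Real.exp (x - x^2) * Real.exp (x^2 - x) = 1 := by
    rw [← Real.exp_add]; ring_nf; exact Real.exp_zero
  rcases le_or_gt 0 x with h0 | h0
  · -- use exp t ≥ 1 + t with t = x² - x
    have h1 : 1 + (x^2 - x) ≤ Real.exp (x^2 - x) := by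
      have := Real.add_one_le_exp (x^2 - x); linarith
    have h2 : (0:ℝ) < 1 + (x^2 - x) := by nlinarith [sq_nonneg (x - 1)]
    have h3 : Real.exp (x - x^2) ≤ 1 / (1 + (x^2 - x)) := by
      rw [le_div_iff₀ h2]
      calc Real.exp (x - x^2) * (1 + (x^2 - x))
          ≤ Real.exp (x - x^2) * Real.exp (x^2 - x) := by
            exact mul_le_mul_of_nonneg_left h1 (Real.exp_pos _).le
        _ = 1 := key
    refine h3.trans ?_
    rw [div_le_iff₀ h2]
    nlinarith [pow_nonneg h0 3]
  · -- x < 0 : use degree-4 Taylor lower bound on exp(x²-x)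
    set t : ℝ := x^2 - x with ht
    have htnn : 0 ≤ t := by nlinarith
    have h1 : 1 + t + t^2/2 + t^3/6 + t^4/24 ≤ Real.exp t := by
      have := Real.sum_le_exp_of_nonneg htnn 5
      simp [Finset.sum_range_succ, Nat.factorial] at this
      linarith
    have h2 : (0:ℝ) < 1 + t + t^2/2 + t^3/6 + t^4/24 := by positivity
    have h3 : Real.exp (x - x^2) ≤ 1 / (1 + t + t^2/2 + t^3/6 + t^4/24) := by
      rw [le_div_iff₀ h2]
      calc Real.exp (x - x^2) * (1 + t + t^2/2 + t^3/6 + t^4/24)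
          ≤ Real.exp (x - x^2) * Real.exp t := by
            exact mul_le_mul_of_nonneg_left h1 (Real.exp_pos _).le
        _ = 1 := key
    refine h3.trans ?_
    rw [div_le_iff₀ h2, ht]
    nlinarith [sq_nonneg x, sq_nonneg (x + 2/3), sq_nonneg (x*(x+2/3)), sq_nonneg (x^2*(x+2/3)), sq_nonneg (x^3*(x+2/3)), sq_nonneg (x^4*(x+2/3))]
end

section
/- Let d ≥ 1, let G, D > 0, let x_t, x, g ∈ ℝ^d satisfy ‖g‖ ≤ G and ‖x_t − x‖ ≤ D, and let 0 ≤ η ≤ 2/(3DG). Then exp(−ℓ_t^η(x)) ≤ 1 + η⟨x_t − x, g⟩, where ℓ_t^η(x) = −η⟨x_t − x, g⟩ + η²⟨x_t − x, g⟩². -/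
/-! With `z = η⟪xt - x, g⟫` the claim is `exp (z - z²) ≤ 1 + z`, and Cauchy–Schwarz together with
the bound on `η` gives `-2/3 ≤ z`. For `z ≥ 0` it suffices that `(1 + z)(1 + z² - z) = 1 + z³ ≥ 1`;
for `-2/3 ≤ z < 0` the inequality is tight enough that `exp` has to be bounded below by its
Taylor polynomial of degree four. -/

open Real

lemma quartic_taylor_le_exp {s : ℝ} (hs : 0 ≤ s) :
    1 + s + s ^ 2 / 2 + s ^ 3 / 6 + s ^ 4 / 24 ≤ exp s := by
  have := sum_le_exp_of_nonneg hs 5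
  norm_num [Finset.sum_range_succ, Nat.factorial] at this
  linarith

lemma one_le_one_add_mul_quartic_taylor {z : ℝ} (hz : -(2 / 3) ≤ z) (hz0 : z ≤ 0) :
    1 ≤ (1 + z) * (1 + (z ^ 2 - z) + (z ^ 2 - z) ^ 2 / 2 + (z ^ 2 - z) ^ 3 / 6
      + (z ^ 2 - z) ^ 4 / 24) := by
  have hw : 0 ≤ -z := by linarith
  have hc : 0 ≤ z + 2 / 3 := by linarith
  nlinarith [pow_nonneg hw 3, pow_nonneg hw 4, mul_nonneg (pow_nonneg hw 5) hc,
    mul_nonneg (pow_nonneg hw 6) hc]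

lemma one_le_one_add_mul_exp_sq_sub {z : ℝ} (hz : -(2 / 3) ≤ z) :
    1 ≤ (1 + z) * exp (z ^ 2 - z) := by
  rcases le_total 0 z with hz0 | hz0
  · nlinarith [add_one_le_exp (z ^ 2 - z), pow_nonneg hz0 3]
  · calc 1 ≤ _ := one_le_one_add_mul_quartic_taylor hz hz0
      _ ≤ (1 + z) * exp (z ^ 2 - z) := by
        gcongr
        · linarith
        · exact quartic_taylor_le_exp (by nlinarith)

lemma exp_sub_sq_le_one_add_s1 {z : ℝ} (hz : -(2 / 3) ≤ z) : exp (z - z ^ 2) ≤ 1 + z := by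
  have h := one_le_one_add_mul_exp_sq_sub hz
  rwa [← neg_sub, exp_neg, ← div_eq_mul_inv, one_le_div (exp_pos _)] at h

theorem exp_neg_expConcaveSurrogate_le_general
    (d : ℕ) (G D : ℝ)
    (xt x g : EuclideanSpace ℝ (Fin d)) (hg : ‖g‖ ≤ G) (hxtx : ‖xt - x‖ ≤ D)
    (η : ℝ) (hη0 : 0 ≤ η) (hη : η ≤ 2 / (3 * D * G)) :
    Real.exp (-(-η * (inner ℝ (xt - x) g : ℝ) + η^2 * (inner ℝ (xt - x) g : ℝ)^2))
      ≤ 1 + η * (inner ℝ (xt - x) g : ℝ) := by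
  set i : ℝ := inner ℝ (xt - x) g
  have hD : 0 ≤ D := (norm_nonneg _).trans hxtx
  have hi : |i| ≤ D * G :=
    (abs_real_inner_le_norm _ _).trans (mul_le_mul hxtx hg (norm_nonneg _) hD)
  have hηDG : η * (D * G) ≤ 2 / 3 :=
    mul_le_of_le_div₀ (by norm_num) ((abs_nonneg i).trans hi) (hη.trans_eq (by ring))
  have hz : -(2 / 3) ≤ η * i := by
    have := neg_abs_le (η * i)
    rw [abs_mul, abs_of_nonneg hη0] at this
    nlinarith
  convert exp_sub_sq_le_one_add_s1 hz using 2
  ring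

theorem exp_neg_expConcaveSurrogate_le
    (d : ℕ) (hd : 1 ≤ d) (G D : ℝ) (hG : 0 < G) (hD : 0 < D)
    (xt x g : EuclideanSpace ℝ (Fin d)) (hg : ‖g‖ ≤ G) (hxtx : ‖xt - x‖ ≤ D)
    (η : ℝ) (hη0 : 0 ≤ η) (hη : η ≤ 2 / (3 * D * G)) :
    Real.exp (-(-η * (inner ℝ (xt - x) g : ℝ) + η^2 * (inner ℝ (xt - x) g : ℝ)^2))
      ≤ 1 + η * (inner ℝ (xt - x) g : ℝ) :=
  exp_neg_expConcaveSurrogate_le_general d G D xt x g hg hxtx η hη0 hη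
end

section
/- Let I be a finite nonempty index set, let π_i > 0 for i ∈ I with Σ_{i∈I} π_i ≤ 1, let η_i > 0 for each i ∈ I, let T ≥ 1, and for each t ∈ {1,…,T} and i ∈ I let x_t^i ∈ ℝ^d, h_t^i ∈ ℝ, and g_t ∈ ℝ^d. Define x_t = (Σ_{i∈I} π_i exp(−Σ_{τ=1}^{t−1} h_τ^i) η_i x_t^i) / (Σ_{i∈I} π_i exp(−Σ_{τ=1}^{t−1} h_τ^i) η_i). If for every i ∈ I and every t ∈ {1,…,T} it holds that exp(−h_t^i) ≤ 1 + η_i ⟨x_t − x_t^i, g_t⟩, then for every i ∈ I, π_i exp(−Σ_{t=1}^T h_t^i) ≤ 1; equivalently, −Σ_{t=1}^T h_t^i ≤ ln(1/π_i). -/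
/-!
The potential `Φ t = ∑ i, π i * exp (-∑_{τ ≤ t} h τ i)` starts at `∑ i, π i ≤ 1` and never
increases: multiplying the hypothesis at round `t + 1` by the current weight of expert `i` and
summing, the first-order terms `∑ i, w i * η i * ⟪xbar - x i, g⟫` cancel exactly because `xbar` is
the centre of mass of the `x i` for the tilted weights `w i * η i`. Each summand of `Φ T` is then
at most `1`.
-/

open Finset

theorem Finset.sum_smul_centerMass_sub {ι R E : Type*} [Field R] [AddCommGroup E] [Module R E]
    {t : Finset ι} {w : ι → R} (z : ι → E) (hw : ∑ i ∈ t, w i ≠ 0) :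
    ∑ i ∈ t, w i • (t.centerMass w z - z i) = 0 := by
  simp only [smul_sub, sum_sub_distrib, ← sum_smul, centerMass, smul_inv_smul₀ hw, sub_self]

section InnerProductSpace

variable {ι E : Type*} [NormedAddCommGroup E] [InnerProductSpace ℝ E]

theorem Finset.sum_mul_inner_centerMass_sub {t : Finset ι} {w : ι → ℝ} (z : ι → E)
    (hw : ∑ i ∈ t, w i ≠ 0) (g : E) :
    ∑ i ∈ t, w i * inner ℝ (t.centerMass w z - z i) g = 0 := by
  simp only [← real_inner_smul_left, ← sum_inner, sum_smul_centerMass_sub z hw, inner_zero_left]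

theorem sum_mul_le_sum_of_le_one_add_inner_centerMass [Fintype ι] {w η a : ι → ℝ}
    (hw : ∀ i, 0 ≤ w i) (hwη : ∑ i, w i * η i ≠ 0) (z : ι → E) (g : E)
    (ha : ∀ i, a i ≤ 1 + η i * inner ℝ (univ.centerMass (fun i => w i * η i) z - z i) g) :
    ∑ i, w i * a i ≤ ∑ i, w i :=
  calc ∑ i, w i * a i
      ≤ ∑ i, w i * (1 + η i * inner ℝ (univ.centerMass (fun i => w i * η i) z - z i) g) :=
        sum_le_sum fun i _ => mul_le_mul_of_nonneg_left (ha i) (hw i)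
    _ = ∑ i, w i +
          ∑ i, w i * η i * inner ℝ (univ.centerMass (fun i => w i * η i) z - z i) g := by
        simp only [mul_add, mul_one, mul_assoc, sum_add_distrib]
    _ = ∑ i, w i := by rw [sum_mul_inner_centerMass_sub z hwη, add_zero]

end InnerProductSpace

section Potential

variable {I : Type*} (π : I → ℝ) (h : ℕ → I → ℝ)

noncomputable def expWeight (t : ℕ) (i : I) : ℝ :=
  π i * Real.exp (-∑ τ ∈ Icc 1 t, h τ i)

theorem expWeight_succ (t : ℕ) (i : I) :
    expWeight π h (t + 1) i = expWeight π h t i * Real.exp (-h (t + 1) i) := by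
  rw [expWeight, expWeight, sum_Icc_succ_top (by omega), neg_add, Real.exp_add, mul_assoc]

variable {π}

theorem expWeight_pos (hπ : ∀ i, 0 < π i) (t : ℕ) (i : I) : 0 < expWeight π h t i :=
  mul_pos (hπ i) (Real.exp_pos _)

theorem sum_expWeight_succ_le [Fintype I] [Nonempty I] {E : Type*} [NormedAddCommGroup E]
    [InnerProductSpace ℝ E] (hπ : ∀ i, 0 < π i) {η : I → ℝ} (hη : ∀ i, 0 < η i) (t : ℕ)
    (y : I → E) (g : E) (hexp : ∀ i, Real.exp (-h (t + 1) i) ≤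
      1 + η i * inner ℝ (univ.centerMass (fun i => expWeight π h t i * η i) y - y i) g) :
    ∑ i, expWeight π h (t + 1) i ≤ ∑ i, expWeight π h t i := by
  have hmass : ∑ i, expWeight π h t i * η i ≠ 0 :=
    (sum_pos (fun i _ => mul_pos (expWeight_pos h hπ t i) (hη i)) univ_nonempty).ne'
  simp only [expWeight_succ]
  exact sum_mul_le_sum_of_le_one_add_inner_centerMass (fun i => (expWeight_pos h hπ t i).le)
    hmass y g hexp

end Potential

theorem meta_potential_bound_general
    (d : ℕ) (I : Type*) [Fintype I]
    (π : I → ℝ) (hπpos : ∀ i, 0 < π i) (hπsum : ∑ i, π i ≤ 1)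
    (η : I → ℝ) (hηpos : ∀ i, 0 < η i)
    (T : ℕ)
    (x : ℕ → I → EuclideanSpace ℝ (Fin d)) (h : ℕ → I → ℝ)
    (g : ℕ → EuclideanSpace ℝ (Fin d))
    (xbar : ℕ → EuclideanSpace ℝ (Fin d))
    (hxbar : ∀ t ∈ Finset.Icc 1 T, xbar t =
      (∑ i, π i * Real.exp (-(∑ τ ∈ Finset.Icc 1 (t - 1), h τ i)) * η i)⁻¹ •
        ∑ i, (π i * Real.exp (-(∑ τ ∈ Finset.Icc 1 (t - 1), h τ i)) * η i) • x t i)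
    (hexp : ∀ i, ∀ t ∈ Finset.Icc 1 T,
      Real.exp (-h t i) ≤ 1 + η i * (inner ℝ (xbar t - x t i) (g t) : ℝ)) :
    ∀ i, π i * Real.exp (-(∑ t ∈ Finset.Icc 1 T, h t i)) ≤ 1 ∧
      -(∑ t ∈ Finset.Icc 1 T, h t i) ≤ Real.log (1 / π i) := by
  intro i
  have : Nonempty I := ⟨i⟩
  have hpotential : ∀ t ≤ T, ∑ j, expWeight π h t j ≤ 1 := by
    intro t
    induction t with
    | zero => intro _; simpa [expWeight] using hπsum
    | succ t ih =>
      intro ht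
      have hround : t + 1 ∈ Icc 1 T := mem_Icc.2 ⟨by omega, ht⟩
      have hcentre :
          xbar (t + 1) = univ.centerMass (fun j => expWeight π h t j * η j) (x (t + 1)) := by
        rw [hxbar (t + 1) hround, Nat.add_sub_cancel]
        rfl
      refine (sum_expWeight_succ_le h hπpos hηpos t (x (t + 1)) (g (t + 1)) fun j => ?_).trans
        (ih (by omega))
      exact hcentre ▸ hexp j (t + 1) hround
  have hbound : expWeight π h T i ≤ 1 :=
    (single_le_sum (fun j _ => (expWeight_pos h hπpos T j).le) (mem_univ i)).trans
      (hpotential T le_rfl)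
  refine ⟨hbound, ?_⟩
  rw [Real.le_log_iff_exp_le (one_div_pos.2 (hπpos i)), le_div_iff₀ (hπpos i), mul_comm]
  exact hbound

theorem meta_potential_bound
    (d : ℕ) (I : Type*) [Fintype I] [Nonempty I]
    (π : I → ℝ) (hπpos : ∀ i, 0 < π i) (hπsum : ∑ i, π i ≤ 1)
    (η : I → ℝ) (hηpos : ∀ i, 0 < η i)
    (T : ℕ) (hT : 1 ≤ T)
    (x : ℕ → I → EuclideanSpace ℝ (Fin d)) (h : ℕ → I → ℝ)
    (g : ℕ → EuclideanSpace ℝ (Fin d))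
    (xbar : ℕ → EuclideanSpace ℝ (Fin d))
    (hxbar : ∀ t ∈ Finset.Icc 1 T, xbar t =
      (∑ i, π i * Real.exp (-(∑ τ ∈ Finset.Icc 1 (t - 1), h τ i)) * η i)⁻¹ •
        ∑ i, (π i * Real.exp (-(∑ τ ∈ Finset.Icc 1 (t - 1), h τ i)) * η i) • x t i)
    (hexp : ∀ i, ∀ t ∈ Finset.Icc 1 T,
      Real.exp (-h t i) ≤ 1 + η i * (inner ℝ (xbar t - x t i) (g t) : ℝ)) :
    ∀ i, π i * Real.exp (-(∑ t ∈ Finset.Icc 1 T, h t i)) ≤ 1 ∧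
      -(∑ t ∈ Finset.Icc 1 T, h t i) ≤ Real.log (1 / π i) :=
  meta_potential_bound_general d I π hπpos hπsum η hηpos T x h g xbar hxbar hexp
end

section
/- Let d ≥ 1, let T ≥ 1 be an integer, let G, D > 0 and 0 < η ≤ 1/(5GD). Let 𝒟 ⊆ ℝ^d be a nonempty convex set of diameter at most D, let x_1,…,x_T ∈ 𝒟 and g_1,…,g_T ∈ ℝ^d with ‖g_t‖ ≤ G, and define s_t^η(x) = −η⟨x_t − x, g_t⟩ + η²G²‖x_t − x‖². Let y_1,…,y_{T+1} ∈ 𝒟 be a sequence such that for every t ∈ {1,…,T} and every u ∈ 𝒟, ‖y_{t+1} − u‖ ≤ ‖y_t − (1/(2η²G²t))(η g_t + 2η²G²(y_t − x_t)) − u‖ (a property satisfied when y_{t+1} is the Euclidean projection onto 𝒟 of the gradient-descent step y_t − (1/(2η²G²t))∇s_t^η(y_t)). Then for every u ∈ 𝒟: Σ_{t=1}^T s_t^η(y_t) − Σ_{t=1}^T s_t^η(u) ≤ 1 + ln T. -/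
/-!
Each surrogate `s_t` is a quadratic of curvature `μ = 2η²G²`, so its regret against `u` is
exactly `⟪∇s_t(y_t), y_t - u⟫ - (μ/2)‖y_t - u‖²`. The classical analysis of gradient descent
with step `1/(μt)` (Hazan–Agarwal–Kale) squares the step inequality to bound the linear term;
the distance terms then telescope and what is left is `‖∇s_t‖² / (2μt)`. Since `ηGD ≤ 1/5`,
`‖∇s_t(y_t)‖ ≤ (7/5)ηG`, so the regret is at most `(49/100) ∑ 1/t ≤ 1 + log T`.
-/

open Finset Real

theorem sum_Icc_telescope (r : ℕ → ℝ) (T : ℕ) :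
    ∑ t ∈ Icc 1 T, (((t : ℝ) - 1) * r t - t * r (t + 1)) = -(T * r (T + 1)) := by
  induction T with
  | zero => simp
  | succ T ih =>
    rw [sum_Icc_succ_top (by omega), ih]
    push_cast
    ring

theorem sum_Icc_inv_le_one_add_log (T : ℕ) : ∑ t ∈ Icc 1 T, (t : ℝ)⁻¹ ≤ 1 + Real.log T := by
  simpa [harmonic_eq_sum_Icc] using harmonic_le_one_add_log T

section OnlineGradientDescent

variable {E : Type*} [NormedAddCommGroup E] [InnerProductSpace ℝ E]

theorem inner_le_of_descent_step {y y' w u : E} {α : ℝ} (hα : 0 < α)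
    (hstep : ‖y' - u‖ ≤ ‖y - α • w - u‖) :
    inner ℝ w (y - u) ≤ (‖y - u‖ ^ 2 - ‖y' - u‖ ^ 2) / (2 * α) + α / 2 * ‖w‖ ^ 2 := by
  have hsq : ‖y' - u‖ ^ 2 ≤ ‖y - u‖ ^ 2 - 2 * α * inner ℝ w (y - u) + α ^ 2 * ‖w‖ ^ 2 := by
    calc ‖y' - u‖ ^ 2 ≤ ‖(y - u) - α • w‖ ^ 2 := by
          rw [sub_right_comm]; gcongr
      _ = _ := by
          rw [norm_sub_sq_real, real_inner_smul_right, norm_smul, mul_pow, Real.norm_eq_abs,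
            sq_abs, real_inner_comm]
          ring
  rw [div_add' _ _ _ (by positivity), le_div_iff₀ (by positivity)]
  nlinarith

theorem regret_le_of_strongly_convex_descent (f : ℕ → E → ℝ) (w y : ℕ → E) (u : E)
    {μ L : ℝ} (hμ : 0 < μ) (T : ℕ)
    (hf : ∀ t ∈ Icc 1 T, f t (y t) - f t u ≤ inner ℝ (w t) (y t - u) - μ / 2 * ‖y t - u‖ ^ 2)
    (hw : ∀ t ∈ Icc 1 T, ‖w t‖ ≤ L)
    (hstep : ∀ t ∈ Icc 1 T, ‖y (t + 1) - u‖ ≤ ‖y t - (1 / (μ * t)) • w t - u‖) :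
    ∑ t ∈ Icc 1 T, (f t (y t) - f t u) ≤ L ^ 2 / (2 * μ) * ∑ t ∈ Icc 1 T, (t : ℝ)⁻¹ := by
  have hround : ∀ t ∈ Icc 1 T, f t (y t) - f t u ≤
      μ / 2 * (((t : ℝ) - 1) * ‖y t - u‖ ^ 2 - t * ‖y (t + 1) - u‖ ^ 2)
        + L ^ 2 / (2 * μ) * (t : ℝ)⁻¹ := by
    intro t ht
    have htpos : (0 : ℝ) < t := by simp only [mem_Icc] at ht; exact_mod_cast ht.1
    have hstep_t := inner_le_of_descent_step (by positivity) (hstep t ht)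
    have hw_t : ‖w t‖ ^ 2 ≤ L ^ 2 := pow_le_pow_left₀ (norm_nonneg _) (hw t ht) 2
    have hgrad : 1 / (μ * t) / 2 * ‖w t‖ ^ 2 ≤ L ^ 2 / (2 * μ) * (t : ℝ)⁻¹ := by
      rw [show 1 / (μ * t) / 2 = (2 * μ)⁻¹ * (t : ℝ)⁻¹ by field_simp, div_eq_mul_inv]
      nlinarith [show 0 < (2 * μ)⁻¹ * (t : ℝ)⁻¹ by positivity]
    have hscale : (‖y t - u‖ ^ 2 - ‖y (t + 1) - u‖ ^ 2) / (2 * (1 / (μ * t)))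
        = μ * t / 2 * (‖y t - u‖ ^ 2 - ‖y (t + 1) - u‖ ^ 2) := by
      field_simp
    linarith [hf t ht]
  calc ∑ t ∈ Icc 1 T, (f t (y t) - f t u)
      ≤ ∑ t ∈ Icc 1 T, (μ / 2 * (((t : ℝ) - 1) * ‖y t - u‖ ^ 2 - t * ‖y (t + 1) - u‖ ^ 2)
          + L ^ 2 / (2 * μ) * (t : ℝ)⁻¹) := sum_le_sum hround
    _ = -(μ / 2 * (T * ‖y (T + 1) - u‖ ^ 2)) + L ^ 2 / (2 * μ) * ∑ t ∈ Icc 1 T, (t : ℝ)⁻¹ := by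
      rw [sum_add_distrib, ← mul_sum, ← mul_sum, sum_Icc_telescope, mul_neg]
    _ ≤ L ^ 2 / (2 * μ) * ∑ t ∈ Icc 1 T, (t : ℝ)⁻¹ := by
      have : 0 ≤ μ / 2 * (T * ‖y (T + 1) - u‖ ^ 2) := by positivity
      linarith

theorem surrogate_sub_eq (x g y u : E) (a c : ℝ) :
    (-a * inner ℝ (x - y) g + c * ‖x - y‖ ^ 2) - (-a * inner ℝ (x - u) g + c * ‖x - u‖ ^ 2)
      = inner ℝ (a • g + (2 * c) • (y - x)) (y - u) - c * ‖y - u‖ ^ 2 := by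
  simp only [← real_inner_self_eq_norm_sq, inner_add_left, inner_sub_left, inner_sub_right,
    real_inner_smul_left, real_inner_comm g, real_inner_comm x y, real_inner_comm x u,
    real_inner_comm u y]
  ring

theorem norm_surrogate_grad_le {x g y : E} {η G D : ℝ} (hη : 0 ≤ η) (hg : ‖g‖ ≤ G)
    (hyx : ‖y - x‖ ≤ D) (hηGD : η * G * D ≤ 1 / 5) :
    ‖η • g + (2 * η ^ 2 * G ^ 2) • (y - x)‖ ≤ 7 / 5 * (η * G) := by
  have hηG : 0 ≤ η * G := mul_nonneg hη ((norm_nonneg g).trans hg)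
  calc ‖η • g + (2 * η ^ 2 * G ^ 2) • (y - x)‖
      ≤ η * ‖g‖ + 2 * η ^ 2 * G ^ 2 * ‖y - x‖ := by
        refine (norm_add_le _ _).trans_eq ?_
        rw [norm_smul, norm_smul, Real.norm_of_nonneg hη, Real.norm_of_nonneg (by positivity)]
    _ ≤ η * G + 2 * (η * G) * (η * G * D) := by
        have := mul_le_mul_of_nonneg_left hyx (by positivity : 0 ≤ 2 * η ^ 2 * G ^ 2)
        nlinarith [mul_le_mul_of_nonneg_left hg hη]
    _ ≤ 7 / 5 * (η * G) := by nlinarith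

end OnlineGradientDescent

theorem strongly_convex_expert_regret_general
    (d T : ℕ)
    (G D η : ℝ) (hG : 0 < G) (hD : 0 < D) (hη0 : 0 < η) (hη : η ≤ 1 / (5 * G * D))
    (𝒟 : Set (EuclideanSpace ℝ (Fin d)))
    (hdiam : ∀ a ∈ 𝒟, ∀ b ∈ 𝒟, ‖a - b‖ ≤ D)
    (x g : ℕ → EuclideanSpace ℝ (Fin d))
    (hx : ∀ t ∈ Finset.Icc 1 T, x t ∈ 𝒟)
    (hg : ∀ t ∈ Finset.Icc 1 T, ‖g t‖ ≤ G)
    (s : ℕ → EuclideanSpace ℝ (Fin d) → ℝ)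
    (hs : ∀ t y, s t y = -η * (inner ℝ (x t - y) (g t) : ℝ) + η^2 * G^2 * ‖x t - y‖^2)
    (y : ℕ → EuclideanSpace ℝ (Fin d))
    (hy : ∀ t ∈ Finset.Icc 1 (T + 1), y t ∈ 𝒟)
    (hstep : ∀ t ∈ Finset.Icc 1 T, ∀ u ∈ 𝒟,
      ‖y (t + 1) - u‖ ≤
        ‖y t - (1 / (2 * η^2 * G^2 * t)) • (η • g t + (2 * η^2 * G^2) • (y t - x t)) - u‖) :
    ∀ u ∈ 𝒟,
      (∑ t ∈ Finset.Icc 1 T, s t (y t)) - (∑ t ∈ Finset.Icc 1 T, s t u)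
        ≤ 1 + Real.log T := by
  intro u hu
  have hηGD : η * G * D ≤ 1 / 5 := by
    have := (le_div_iff₀ (by positivity)).1 hη
    linarith
  have hregret := regret_le_of_strongly_convex_descent s
    (fun t ↦ η • g t + (2 * η ^ 2 * G ^ 2) • (y t - x t)) y u (L := 7 / 5 * (η * G))
    (by positivity : 0 < 2 * η ^ 2 * G ^ 2) T
    (fun t _ ↦ by rw [hs, hs, surrogate_sub_eq, ← mul_assoc 2 (η ^ 2)]; exact le_of_eq (by ring))
    (fun t ht ↦ norm_surrogate_grad_le hη0.le (hg t ht)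
      (hdiam _ (hy t (Icc_subset_Icc_right T.le_succ ht)) _ (hx t ht)) hηGD)
    (fun t ht ↦ hstep t ht u hu)
  have hconst : (7 / 5 * (η * G)) ^ 2 / (2 * (2 * η ^ 2 * G ^ 2)) = 49 / 100 := by
    field_simp; ring
  rw [hconst] at hregret
  have hharm := sum_Icc_inv_le_one_add_log T
  have hharm_nonneg : 0 ≤ ∑ t ∈ Icc 1 T, (t : ℝ)⁻¹ := by positivity
  rw [← sum_sub_distrib]
  linarith

theorem strongly_convex_expert_regret
    (d T : ℕ) (hd : 1 ≤ d) (hT : 1 ≤ T)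
    (G D η : ℝ) (hG : 0 < G) (hD : 0 < D) (hη0 : 0 < η) (hη : η ≤ 1 / (5 * G * D))
    (𝒟 : Set (EuclideanSpace ℝ (Fin d))) (hne : 𝒟.Nonempty) (hconv : Convex ℝ 𝒟)
    (hdiam : ∀ a ∈ 𝒟, ∀ b ∈ 𝒟, ‖a - b‖ ≤ D)
    (x g : ℕ → EuclideanSpace ℝ (Fin d))
    (hx : ∀ t ∈ Finset.Icc 1 T, x t ∈ 𝒟)
    (hg : ∀ t ∈ Finset.Icc 1 T, ‖g t‖ ≤ G)
    (s : ℕ → EuclideanSpace ℝ (Fin d) → ℝ)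
    (hs : ∀ t y, s t y = -η * (inner ℝ (x t - y) (g t) : ℝ) + η^2 * G^2 * ‖x t - y‖^2)
    (y : ℕ → EuclideanSpace ℝ (Fin d))
    (hy : ∀ t ∈ Finset.Icc 1 (T + 1), y t ∈ 𝒟)
    (hstep : ∀ t ∈ Finset.Icc 1 T, ∀ u ∈ 𝒟,
      ‖y (t + 1) - u‖ ≤
        ‖y t - (1 / (2 * η^2 * G^2 * t)) • (η • g t + (2 * η^2 * G^2) • (y t - x t)) - u‖) :
    ∀ u ∈ 𝒟,
      (∑ t ∈ Finset.Icc 1 T, s t (y t)) - (∑ t ∈ Finset.Icc 1 T, s t u)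
        ≤ 1 + Real.log T :=
  strongly_convex_expert_regret_general d T G D η hG hD hη0 hη 𝒟 hdiam x g hx hg s hs y hy hstep
end

section
/- Let d ≥ 1, let G, D > 0, let x_t, x, g ∈ ℝ^d satisfy ‖g‖ ≤ G and ‖x − x_t‖ ≤ D, and let 0 < η ≤ 1/(5DG). Set v = η g + 2η²⟨g, x − x_t⟩ g (the gradient of ℓ_t^η at x). Then for every w ∈ ℝ^d, ⟨v, w⟩² ≤ 2η²⟨g, w⟩²; equivalently, the matrix 2η² g gᵀ − v vᵀ is positive semidefinite, so the Hessian of ℓ_t^η dominates ∇ℓ_t^η(x)(∇ℓ_t^η(x))ᵀ and ℓ_t^η is 1-exp-concave. -/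
/-!
The gradient `v` is the multiple `η (1 + 2t) g` of `g`, where `t = η ⟪g, x - xt⟫`. By
Cauchy–Schwarz and the step-size bound, `|t| ≤ η G D ≤ 1/5`, so `(1 + 2t)² ≤ (7/5)² ≤ 2` and
`⟪v, w⟫² = η² (1 + 2t)² ⟪g, w⟫² ≤ 2 η² ⟪g, w⟫²`.
-/

open RealInnerProductSpace

lemma sq_add_two_mul_sq_mul_le_two_mul_sq {η c : ℝ} (h : |η * c| ≤ 1 / 5) :
    (η + 2 * η ^ 2 * c) ^ 2 ≤ 2 * η ^ 2 := by
  obtain ⟨hlow, hupp⟩ := abs_le.mp h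
  have hsq : (1 + 2 * (η * c)) ^ 2 ≤ 2 := by nlinarith
  calc (η + 2 * η ^ 2 * c) ^ 2 = η ^ 2 * (1 + 2 * (η * c)) ^ 2 := by ring
    _ ≤ η ^ 2 * 2 := by gcongr
    _ = 2 * η ^ 2 := mul_comm _ _

lemma abs_mul_inner_le_one_fifth {E : Type*} [NormedAddCommGroup E] [InnerProductSpace ℝ E]
    {g y : E} {G D η : ℝ} (hg : ‖g‖ ≤ G) (hy : ‖y‖ ≤ D) (hη0 : 0 < η)
    (hη : η ≤ 1 / (5 * D * G)) :
    |η * ⟪g, y⟫| ≤ 1 / 5 := by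
  have hDG : 0 < 5 * D * G := one_div_pos.mp (hη0.trans_le hη)
  have hη_DG : η * (5 * D * G) ≤ 1 := (le_div_iff₀ hDG).mp (by rwa [one_div] at hη ⊢)
  calc |η * ⟪g, y⟫| = η * |⟪g, y⟫| := by rw [abs_mul, abs_of_pos hη0]
    _ ≤ η * (‖g‖ * ‖y‖) := by gcongr; exact abs_real_inner_le_norm g y
    _ ≤ η * (G * D) := by gcongr; exact (norm_nonneg g).trans hg
    _ ≤ 1 / 5 := by linarith

theorem expConcave_gradient_psd_general
    (d : ℕ) (G D : ℝ)
    (xt x g : EuclideanSpace ℝ (Fin d)) (hg : ‖g‖ ≤ G) (hxtx : ‖x - xt‖ ≤ D)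
    (η : ℝ) (hη0 : 0 < η) (hη : η ≤ 1 / (5 * D * G))
    (v : EuclideanSpace ℝ (Fin d))
    (hv : v = η • g + (2 * η^2 * (inner ℝ g (x - xt) : ℝ)) • g) :
    ∀ w : EuclideanSpace ℝ (Fin d),
      (inner ℝ v w : ℝ)^2 ≤ 2 * η^2 * (inner ℝ g w : ℝ)^2 := by
  intro w
  have hvw : ⟪v, w⟫ = (η + 2 * η ^ 2 * ⟪g, x - xt⟫) * ⟪g, w⟫ := by
    rw [hv, inner_add_left, inner_smul_left, inner_smul_left]
    simp only [RCLike.conj_to_real]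
    ring
  have hcoeff := sq_add_two_mul_sq_mul_le_two_mul_sq (abs_mul_inner_le_one_fifth hg hxtx hη0 hη)
  rw [hvw, mul_pow]
  exact mul_le_mul_of_nonneg_right hcoeff (sq_nonneg _)

theorem expConcave_gradient_psd
    (d : ℕ) (hd : 1 ≤ d) (G D : ℝ) (hG : 0 < G) (hD : 0 < D)
    (xt x g : EuclideanSpace ℝ (Fin d)) (hg : ‖g‖ ≤ G) (hxtx : ‖x - xt‖ ≤ D)
    (η : ℝ) (hη0 : 0 < η) (hη : η ≤ 1 / (5 * D * G))
    (v : EuclideanSpace ℝ (Fin d))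
    (hv : v = η • g + (2 * η^2 * (inner ℝ g (x - xt) : ℝ)) • g) :
    ∀ w : EuclideanSpace ℝ (Fin d),
      (inner ℝ v w : ℝ)^2 ≤ 2 * η^2 * (inner ℝ g w : ℝ)^2 :=
  expConcave_gradient_psd_general d G D xt x g hg hxtx η hη0 hη v hv
end

section
/- Let d ≥ 1, let 𝒟 ⊆ ℝ^d be a convex set, let f_1,…,f_T : ℝ^d → ℝ be convex differentiable functions, let x_1,…,x_T ∈ 𝒟, set g_t = ∇f_t(x_t), let η > 0, G ≥ 0 and u ∈ 𝒟, and define s_t^η(x) = −η⟨x_t − x, g_t⟩ + η²G²‖x_t − x‖². Then Σ_{t=1}^T f_t(x_t) − Σ_{t=1}^T f_t(u) ≤ (1/η) Σ_{t=1}^T (s_t^η(x_t) − s_t^η(u)) + η G² Σ_{t=1}^T ‖x_t − u‖², where s_t^η(x_t) = 0. -/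
/-!
Convexity of `f_t` gives `f_t(x_t) - f_t(u) ≤ ⟪x_t - u, g_t⟫` (restrict `f_t` to the segment from
`x_t` to `u`). Dividing the surrogate regret `s_t^η(x_t) - s_t^η(u)` by `η` and adding
`η G² ‖x_t - u‖²` cancels the quadratic term and returns exactly this linearized regret.
-/

open AffineMap

theorem ConvexOn.apply_add_fderiv_le {E : Type*} [NormedAddCommGroup E] [NormedSpace ℝ E]
    {f : E → ℝ} {f' : E →L[ℝ] ℝ} {x : E} (hf : ConvexOn ℝ Set.univ f)
    (hf' : HasFDerivAt f f' x) (y : E) :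
    f x + f' (y - x) ≤ f y := by
  set φ : ℝ →ᵃ[ℝ] E := lineMap x y with hφ
  have hline : ConvexOn ℝ Set.univ (f ∘ φ) := hf.comp_affineMap φ
  have hderiv : HasDerivAt (f ∘ φ) (f' (y - x)) 0 := by
    refine HasFDerivAt.comp_hasDerivAt (0 : ℝ) ?_ hasDerivAt_lineMap
    simpa [hφ] using hf'
  have hslope := hline.le_slope_of_hasDerivAt (Set.mem_univ 0) (Set.mem_univ 1) one_pos hderiv
  simp only [slope_def_field, Function.comp_apply, hφ, lineMap_apply_zero, lineMap_apply_one,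
    sub_zero, div_one] at hslope
  linarith

theorem ConvexOn.sub_le_inner_gradient {E : Type*} [NormedAddCommGroup E]
    [InnerProductSpace ℝ E] [CompleteSpace E] {f : E → ℝ} {g x : E}
    (hf : ConvexOn ℝ Set.univ f) (hg : HasGradientAt f g x) (u : E) :
    f x - f u ≤ inner ℝ (x - u) g := by
  have htangent := hf.apply_add_fderiv_le hg.hasFDerivAt u
  rw [InnerProductSpace.toDual_apply_apply, ← neg_sub, inner_neg_right, real_inner_comm]
    at htangent
  linarith

section Surrogate

variable {E : Type*} [NormedAddCommGroup E] [InnerProductSpace ℝ E]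

/-- The surrogate loss `s_t^η`, with `xt = x_t` and `gt = g_t`. -/
noncomputable def surrogateLoss (η G : ℝ) (xt gt y : E) : ℝ :=
  -η * inner ℝ (xt - y) gt + η ^ 2 * G ^ 2 * ‖xt - y‖ ^ 2

@[simp]
theorem surrogateLoss_self (η G : ℝ) (xt gt : E) : surrogateLoss η G xt gt xt = 0 := by
  simp [surrogateLoss]

theorem inv_mul_surrogateLoss_regret_add {η : ℝ} (hη : η ≠ 0) (G : ℝ) (xt gt u : E) :
    1 / η * (surrogateLoss η G xt gt xt - surrogateLoss η G xt gt u)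
      + η * G ^ 2 * ‖xt - u‖ ^ 2 = inner ℝ (xt - u) gt := by
  rw [surrogateLoss_self, surrogateLoss]
  field_simp
  ring

end Surrogate

theorem regret_decomposition_strongly_convex_surrogate_general
    (d T : ℕ)
    (f : ℕ → EuclideanSpace ℝ (Fin d) → ℝ)
    (hfconv : ∀ t ∈ Finset.Icc 1 T, ConvexOn ℝ Set.univ (f t))
    (x : ℕ → EuclideanSpace ℝ (Fin d))
    (g : ℕ → EuclideanSpace ℝ (Fin d))
    (hgrad : ∀ t ∈ Finset.Icc 1 T, HasGradientAt (f t) (g t) (x t))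
    (η G : ℝ) (hη : 0 < η)
    (u : EuclideanSpace ℝ (Fin d))
    (s : ℕ → EuclideanSpace ℝ (Fin d) → ℝ)
    (hs : ∀ t y, s t y = -η * (inner ℝ (x t - y) (g t) : ℝ) + η^2 * G^2 * ‖x t - y‖^2) :
    (∑ t ∈ Finset.Icc 1 T, f t (x t)) - (∑ t ∈ Finset.Icc 1 T, f t u)
      ≤ (1 / η) * (∑ t ∈ Finset.Icc 1 T, (s t (x t) - s t u))
        + η * G^2 * ∑ t ∈ Finset.Icc 1 T, ‖x t - u‖^2 := by
  have hs' : s = fun t => surrogateLoss η G (x t) (g t) := by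
    funext t y
    exact hs t y
  have hrhs : (1 / η) * (∑ t ∈ Finset.Icc 1 T, (s t (x t) - s t u))
        + η * G^2 * ∑ t ∈ Finset.Icc 1 T, ‖x t - u‖^2
      = ∑ t ∈ Finset.Icc 1 T, inner ℝ (x t - u) (g t) := by
    simp only [hs', Finset.mul_sum, ← Finset.sum_add_distrib,
      inv_mul_surrogateLoss_regret_add hη.ne']
  rw [hrhs, ← Finset.sum_sub_distrib]
  exact Finset.sum_le_sum fun t ht => (hfconv t ht).sub_le_inner_gradient (hgrad t ht) u

theorem regret_decomposition_strongly_convex_surrogate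
    (d T : ℕ) (hd : 1 ≤ d)
    (𝒟 : Set (EuclideanSpace ℝ (Fin d))) (hconv : Convex ℝ 𝒟)
    (f : ℕ → EuclideanSpace ℝ (Fin d) → ℝ)
    (hfconv : ∀ t ∈ Finset.Icc 1 T, ConvexOn ℝ Set.univ (f t))
    (x : ℕ → EuclideanSpace ℝ (Fin d)) (hx : ∀ t ∈ Finset.Icc 1 T, x t ∈ 𝒟)
    (g : ℕ → EuclideanSpace ℝ (Fin d))
    (hgrad : ∀ t ∈ Finset.Icc 1 T, HasGradientAt (f t) (g t) (x t))
    (η G : ℝ) (hη : 0 < η) (hG : 0 ≤ G)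
    (u : EuclideanSpace ℝ (Fin d)) (hu : u ∈ 𝒟)
    (s : ℕ → EuclideanSpace ℝ (Fin d) → ℝ)
    (hs : ∀ t y, s t y = -η * (inner ℝ (x t - y) (g t) : ℝ) + η^2 * G^2 * ‖x t - y‖^2) :
    (∑ t ∈ Finset.Icc 1 T, f t (x t)) - (∑ t ∈ Finset.Icc 1 T, f t u)
      ≤ (1 / η) * (∑ t ∈ Finset.Icc 1 T, (s t (x t) - s t u))
        + η * G^2 * ∑ t ∈ Finset.Icc 1 T, ‖x t - u‖^2 :=
  regret_decomposition_strongly_convex_surrogate_general d T f hfconv x g hgrad η G hη u s hs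
end

section
/- Let d ≥ 1, let 𝒟 ⊆ ℝ^d be a convex set, let f_1,…,f_T : ℝ^d → ℝ be convex differentiable functions, let x_1,…,x_T ∈ 𝒟, set g_t = ∇f_t(x_t), let η > 0 and u ∈ 𝒟, and define ℓ_t^η(x) = −η⟨x_t − x, g_t⟩ + η²⟨x_t − x, g_t⟩². Then Σ_{t=1}^T f_t(x_t) − Σ_{t=1}^T f_t(u) ≤ (1/η) Σ_{t=1}^T (ℓ_t^η(x_t) − ℓ_t^η(u)) + η Σ_{t=1}^T ⟨g_t, x_t − u⟩², where ℓ_t^η(x_t) = 0. -/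
/-!
In each round the first-order condition for the convex `f t` gives
`f t (x t) - f t u ≤ a` with `a = ⟪g t, x t - u⟫`, and since `l t (x t) = 0` and
`l t u = -η a + η² a²`, the number `a` equals `(l t (x t) - l t u) / η + η a²` exactly.
-/

open Finset

section FirstOrderCondition

variable {E : Type*} [NormedAddCommGroup E] [NormedSpace ℝ E]

lemma ConvexOn.apply_sub_le_of_hasFDerivAt {S : Set E} {f : E → ℝ} {f' : E →L[ℝ] ℝ} {x y : E}
    (hf : ConvexOn ℝ S f) (hx : x ∈ S) (hy : y ∈ S) (hf' : HasFDerivAt f f' x) :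
    f' (y - x) ≤ f y - f x := by
  set φ : ℝ →ᵃ[ℝ] E := AffineMap.lineMap x y
  have hline : ConvexOn ℝ (φ ⁻¹' S) (f ∘ φ) := hf.comp_affineMap φ
  have hderiv : HasDerivAt (f ∘ φ) (f' (y - x)) 0 :=
    hf'.comp_hasDerivAt_of_eq 0 AffineMap.hasDerivAt_lineMap (AffineMap.lineMap_apply_zero x y).symm
  have hslope := hline.le_slope_of_hasDerivAt (by simpa [φ] using hx) (by simpa [φ] using hy)
    one_pos hderiv
  simpa [φ, slope_def_field] using hslope

end FirstOrderCondition

lemma ConvexOn.sub_le_inner_of_hasGradientAt {E : Type*} [NormedAddCommGroup E]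
    [InnerProductSpace ℝ E] [CompleteSpace E] {S : Set E} {f : E → ℝ} {g x y : E}
    (hf : ConvexOn ℝ S f) (hx : x ∈ S) (hy : y ∈ S) (hg : HasGradientAt f g x) :
    f x - f y ≤ inner ℝ g (x - y) := by
  have h := hf.apply_sub_le_of_hasFDerivAt hx hy (hasGradientAt_iff_hasFDerivAt.mp hg)
  rw [InnerProductSpace.toDual_apply_apply, ← neg_sub x y, inner_neg_right] at h
  linarith

section Surrogate

variable {E : Type*} [NormedAddCommGroup E] [InnerProductSpace ℝ E]

def expConcaveSurrogate (η : ℝ) (x g y : E) : ℝ :=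
  -η * inner ℝ (x - y) g + η ^ 2 * inner ℝ (x - y) g ^ 2

lemma expConcaveSurrogate_self (η : ℝ) (x g : E) : expConcaveSurrogate η x g x = 0 := by
  simp [expConcaveSurrogate]

lemma inner_eq_expConcaveSurrogate_sub_add {η : ℝ} (hη : η ≠ 0) (x g u : E) :
    inner ℝ g (x - u) = 1 / η * (expConcaveSurrogate η x g x - expConcaveSurrogate η x g u)
      + η * inner ℝ g (x - u) ^ 2 := by
  rw [expConcaveSurrogate_self, expConcaveSurrogate, real_inner_comm g]
  field_simp
  ring

end Surrogate

theorem regret_decomposition_expConcave_surrogate_general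
    (d T : ℕ)
    (f : ℕ → EuclideanSpace ℝ (Fin d) → ℝ)
    (hfconv : ∀ t ∈ Finset.Icc 1 T, ConvexOn ℝ Set.univ (f t))
    (x : ℕ → EuclideanSpace ℝ (Fin d))
    (g : ℕ → EuclideanSpace ℝ (Fin d))
    (hgrad : ∀ t ∈ Finset.Icc 1 T, HasGradientAt (f t) (g t) (x t))
    (η : ℝ) (hη : 0 < η)
    (u : EuclideanSpace ℝ (Fin d))
    (l : ℕ → EuclideanSpace ℝ (Fin d) → ℝ)
    (hl : ∀ t y, l t y =
      -η * (inner ℝ (x t - y) (g t) : ℝ) + η^2 * (inner ℝ (x t - y) (g t) : ℝ)^2) :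
    (∑ t ∈ Finset.Icc 1 T, f t (x t)) - (∑ t ∈ Finset.Icc 1 T, f t u)
      ≤ (1 / η) * (∑ t ∈ Finset.Icc 1 T, (l t (x t) - l t u))
        + η * ∑ t ∈ Finset.Icc 1 T, (inner ℝ (g t) (x t - u) : ℝ)^2 := by
  have hround : ∀ t ∈ Icc 1 T, f t (x t) - f t u
      ≤ 1 / η * (l t (x t) - l t u) + η * inner ℝ (g t) (x t - u) ^ 2 := by
    intro t ht
    have hlt : l t = expConcaveSurrogate η (x t) (g t) := funext (hl t)
    rw [hlt, ← inner_eq_expConcaveSurrogate_sub_add hη.ne']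
    exact (hfconv t ht).sub_le_inner_of_hasGradientAt trivial trivial (hgrad t ht)
  rw [← sum_sub_distrib, mul_sum, mul_sum, ← sum_add_distrib]
  exact sum_le_sum hround

theorem regret_decomposition_expConcave_surrogate
    (d T : ℕ) (hd : 1 ≤ d)
    (𝒟 : Set (EuclideanSpace ℝ (Fin d))) (hconv : Convex ℝ 𝒟)
    (f : ℕ → EuclideanSpace ℝ (Fin d) → ℝ)
    (hfconv : ∀ t ∈ Finset.Icc 1 T, ConvexOn ℝ Set.univ (f t))
    (x : ℕ → EuclideanSpace ℝ (Fin d)) (hx : ∀ t ∈ Finset.Icc 1 T, x t ∈ 𝒟)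
    (g : ℕ → EuclideanSpace ℝ (Fin d))
    (hgrad : ∀ t ∈ Finset.Icc 1 T, HasGradientAt (f t) (g t) (x t))
    (η : ℝ) (hη : 0 < η)
    (u : EuclideanSpace ℝ (Fin d)) (hu : u ∈ 𝒟)
    (l : ℕ → EuclideanSpace ℝ (Fin d) → ℝ)
    (hl : ∀ t y, l t y =
      -η * (inner ℝ (x t - y) (g t) : ℝ) + η^2 * (inner ℝ (x t - y) (g t) : ℝ)^2) :
    (∑ t ∈ Finset.Icc 1 T, f t (x t)) - (∑ t ∈ Finset.Icc 1 T, f t u)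
      ≤ (1 / η) * (∑ t ∈ Finset.Icc 1 T, (l t (x t) - l t u))
        + η * ∑ t ∈ Finset.Icc 1 T, (inner ℝ (g t) (x t - u) : ℝ)^2 :=
  regret_decomposition_expConcave_surrogate_general d T f hfconv x g hgrad η hη u l hl
end

section
/- Let T ≥ 1 be an integer, let G, D > 0, let A ≥ 1 and 0 ≤ V ≤ G²D²T, let R be a real number, and set N = ⌈(log₂ T)/2⌉ and η_i = 2^{−i}/(5GD) for i = 0,…,N. If R ≤ η_i V + A/η_i for every i ∈ {0,…,N}, then R ≤ 3√(V·A) + 10GD·A. -/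
/-!
Balancing ηV against A/η: at the unconstrained optimum η* = √(A/V) both terms equal √(VA), so any
η with η ≤ η* ≤ 2η gives ηV + A/η ≤ √(VA) + 2√(VA). The grid halves η starting from 1/(5GD), and
V ≤ G²D²T, A ≥ 1 force η* ≥ 1/(5GD√T), the smallest grid point, so such an η exists on the grid
unless η* > 1/(5GD); in that case the top grid point already gives ηV + A/η ≤ 2A/η = 10GD·A.
-/

open Real

lemma inv_mul_add_div_inv_le {c A V : ℝ} (hc : 0 < c) (h : V ≤ c ^ 2 * A) :
    c⁻¹ * V + A / c⁻¹ ≤ 2 * c * A := by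
  have : c⁻¹ * V ≤ c * A := by
    rw [inv_mul_le_iff₀ hc]
    linarith
  rw [div_inv_eq_mul]
  linarith

lemma mul_add_div_le_three_mul_sqrt {η V A : ℝ} (hV : 0 ≤ V) (hη : 0 < η)
    (hlow : η ^ 2 * V ≤ A) (hhigh : A ≤ 4 * η ^ 2 * V) :
    η * V + A / η ≤ 3 * √(V * A) := by
  have hA : 0 ≤ A := le_trans (by positivity) hlow
  have hfirst : η * V ≤ √(V * A) :=
    le_sqrt_of_sq_le (by nlinarith [mul_le_mul_of_nonneg_left hlow hV])
  have hsecond : A / η ≤ 2 * √(V * A) := by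
    have : A ≤ √((2 * η) ^ 2 * (V * A)) :=
      le_sqrt_of_sq_le (by nlinarith [mul_le_mul_of_nonneg_left hhigh hA])
    rw [sqrt_mul (by positivity), sqrt_sq (by positivity)] at this
    rw [div_le_iff₀ hη]
    linarith
  linarith

lemma exists_le_pow_le_mul {b x : ℝ} {N : ℕ} (hb : 1 ≤ b) (hx : 1 ≤ x) (hxN : x ≤ b ^ N) :
    ∃ i ≤ N, x ≤ b ^ i ∧ b ^ i ≤ b * x := by
  classical
  have hex : ∃ i, x ≤ b ^ i := ⟨N, hxN⟩
  refine ⟨Nat.find hex, Nat.find_min' hex hxN, Nat.find_spec hex, ?_⟩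
  rcases hi : Nat.find hex with _ | k
  · simp only [pow_zero]
    nlinarith
  · have hk : b ^ k < x := not_le.mp (Nat.find_min hex (by omega))
    rw [pow_succ']
    exact mul_le_mul_of_nonneg_left hk.le (by linarith)

lemma le_four_pow_ceil_logb_two_div_two (x : ℝ) : x ≤ 4 ^ ⌈logb 2 x / 2⌉₊ := by
  rcases le_or_gt x 0 with hx | hx
  · exact hx.trans (by positivity)
  calc x = 2 ^ logb 2 x := (rpow_logb two_pos (by norm_num) hx).symm
    _ ≤ 2 ^ (2 * (⌈logb 2 x / 2⌉₊ : ℝ)) := by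
        gcongr
        · norm_num
        · linarith [Nat.le_ceil (logb 2 x / 2)]
    _ = 4 ^ ⌈logb 2 x / 2⌉₊ := by
        rw [rpow_mul zero_le_two, rpow_natCast]
        norm_num

lemma exists_zpow_grid_mul_add_div_le {c A V : ℝ} {N : ℕ} (hc : 0 < c) (hA : 0 < A)
    (hlow : c ^ 2 * A < V) (hhigh : V ≤ 4 ^ N * (c ^ 2 * A)) :
    ∃ i ≤ N, (2 : ℝ) ^ (-(i : ℤ)) / c * V + A / ((2 : ℝ) ^ (-(i : ℤ)) / c) ≤ 3 * √(V * A) := by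
  have hcA : 0 < c ^ 2 * A := by positivity
  obtain ⟨i, hiN, hxi, hix⟩ := exists_le_pow_le_mul (b := 4) (x := V / (c ^ 2 * A)) (by norm_num)
    (by rw [le_div_iff₀ hcA]; linarith) (by rwa [div_le_iff₀ hcA])
  have hsq : ((2 : ℝ) ^ (-(i : ℤ)) / c) ^ 2 = 1 / (4 ^ i * c ^ 2) := by
    rw [zpow_neg, zpow_natCast, div_pow, inv_pow, ← pow_mul, mul_comm i, pow_mul]
    field_simp
    norm_num
  refine ⟨i, hiN, mul_add_div_le_three_mul_sqrt (by linarith) (by positivity) ?_ ?_⟩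
  · rw [div_le_iff₀ hcA] at hxi
    rw [hsq, div_mul_eq_mul_div, one_mul, div_le_iff₀ (by positivity)]
    linarith
  · rw [← mul_div_assoc, le_div_iff₀ hcA] at hix
    rw [hsq, mul_one_div, div_mul_eq_mul_div, le_div_iff₀ (by positivity)]
    linarith

theorem grid_tuning_general
    (T : ℕ) (G D : ℝ) (hG : 0 < G) (hD : 0 < D)
    (A V R : ℝ) (hA : 1 ≤ A) (hV : V ≤ G^2 * D^2 * T)
    (N : ℕ) (hN : N = ⌈Real.logb 2 T / 2⌉₊)
    (η : ℕ → ℝ) (hη : ∀ i, η i = (2 : ℝ)^(-(i : ℤ)) / (5 * G * D))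
    (hR : ∀ i ≤ N, R ≤ η i * V + A / η i) :
    R ≤ 3 * Real.sqrt (V * A) + 10 * G * D * A := by
  have hGD : 0 < 5 * G * D := by positivity
  have hsqrt := sqrt_nonneg (V * A)
  by_cases hsmall : V ≤ (5 * G * D) ^ 2 * A
  · have hR₀ := hR 0 N.zero_le
    simp only [hη, CharP.cast_eq_zero, neg_zero, zpow_zero, one_div] at hR₀
    linarith [inv_mul_add_div_inv_le hGD hsmall]
  · have hVN : V ≤ 4 ^ N * ((5 * G * D) ^ 2 * A) := calc
      V ≤ G ^ 2 * D ^ 2 * T := hV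
      _ ≤ (5 * G * D) ^ 2 * A * T := by
          nlinarith [mul_nonneg (mul_nonneg (sq_nonneg (G * D)) T.cast_nonneg)
            (by linarith : 0 ≤ 25 * A - 1)]
      _ ≤ (5 * G * D) ^ 2 * A * 4 ^ N := by
          gcongr
          rw [hN]
          exact le_four_pow_ceil_logb_two_div_two T
      _ = 4 ^ N * ((5 * G * D) ^ 2 * A) := mul_comm _ _
    obtain ⟨i, hiN, hi⟩ :=
      exists_zpow_grid_mul_add_div_le hGD (by linarith) (not_le.mp hsmall) hVN
    have hRi := hR i hiN
    rw [hη] at hRi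
    linarith [mul_pos hGD (by linarith : 0 < A)]

theorem grid_tuning
    (T : ℕ) (hT : 1 ≤ T) (G D : ℝ) (hG : 0 < G) (hD : 0 < D)
    (A V R : ℝ) (hA : 1 ≤ A) (hV0 : 0 ≤ V) (hV : V ≤ G^2 * D^2 * T)
    (N : ℕ) (hN : N = ⌈Real.logb 2 T / 2⌉₊)
    (η : ℕ → ℝ) (hη : ∀ i, η i = (2 : ℝ)^(-(i : ℤ)) / (5 * G * D))
    (hR : ∀ i ≤ N, R ≤ η i * V + A / η i) :
    R ≤ 3 * Real.sqrt (V * A) + 10 * G * D * A :=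
  grid_tuning_general T G D hG hD A V R hA hV N hN η hη hR
end

section
/- Let d ≥ 1, let T ≥ 1 be an integer, let G, D > 0, let 𝒟 ⊆ ℝ^d be a convex set of diameter at most D, let f_1,…,f_T : ℝ^d → ℝ be convex differentiable functions whose gradients on 𝒟 are bounded in norm by G, let x_t, x_t^c, x* ∈ 𝒟 for t = 1,…,T, set g_t = ∇f_t(x_t), η^c = 1/(2GD√T), and c_t(x) = −η^c⟨x_t − x, g_t⟩ + (η^c G D)². If Σ_{t=1}^T c_t(x_t^c) ≥ −ln 3 and Σ_{t=1}^T (c_t(x_t^c) − c_t(x*)) ≤ 3/4, then Σ_{t=1}^T f_t(x_t) − Σ_{t=1}^T f_t(x*) ≤ 2(1 + ln 3) G D √T. -/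
/-! The surrogate losses are affine in the comparator with slope `ηc`, so the two hypotheses bound
`ηc` times the linearised regret `∑ ⟪x t - x*, g t⟫` by `ln 3 + 3/4 + T (ηc G D)²`, and the choice
of `ηc` makes `T (ηc G D)² = 1/4` and `1 / ηc = 2 G D √T`. By the first-order condition for convex
functions the regret is at most the linearised regret. -/

open Finset RealInnerProductSpace

theorem ConvexOn.inner_gradient_le_sub {F : Type*} [NormedAddCommGroup F] [InnerProductSpace ℝ F]
    [CompleteSpace F] {s : Set F} {f : F → ℝ} (hf : ConvexOn ℝ s f) {x y : F} (hx : x ∈ s)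
    (hy : y ∈ s) (hfx : DifferentiableAt ℝ f x) :
    ⟪gradient f x, y - x⟫ ≤ f y - f x := by
  set ℓ : ℝ →ᵃ[ℝ] F := AffineMap.lineMap x y
  have hderiv : HasDerivAt (f ∘ ℓ) ⟪gradient f x, y - x⟫ 0 := by
    have hfx' : HasFDerivAt f (InnerProductSpace.toDual ℝ F (gradient f x)) (ℓ 0) := by
      simpa [ℓ] using hfx.hasGradientAt.hasFDerivAt
    simpa using hfx'.comp_hasDerivAt 0 AffineMap.hasDerivAt_lineMap
  simpa [slope_def_field, ℓ] using
    (hf.comp_affineMap ℓ).le_slope_of_hasDerivAt (x := 0) (y := 1) (by simpa [ℓ] using hx)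
      (by simpa [ℓ] using hy) zero_lt_one hderiv

theorem sum_sub_le_sum_inner_gradient {ι F : Type*} [NormedAddCommGroup F]
    [InnerProductSpace ℝ F] [CompleteSpace F] {s : Finset ι} {f : ι → F → ℝ}
    (hf : ∀ t ∈ s, ConvexOn ℝ Set.univ (f t)) {x : ι → F}
    (hfx : ∀ t ∈ s, DifferentiableAt ℝ (f t) (x t)) (y : F) :
    ∑ t ∈ s, (f t (x t) - f t y) ≤ ∑ t ∈ s, ⟪x t - y, gradient (f t) (x t)⟫ := by
  refine sum_le_sum fun t ht => ?_
  have h := (hf t ht).inner_gradient_le_sub (Set.mem_univ _) (Set.mem_univ y) (hfx t ht)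
  rw [real_inner_comm, ← neg_sub, inner_neg_left] at h
  linarith

theorem sum_inner_le_of_surrogate_regret {ι F : Type*} [NormedAddCommGroup F]
    [InnerProductSpace ℝ F] {s : Finset ι} {x g xc : ι → F} {y : F} {c : ι → F → ℝ}
    {η K L R : ℝ} (hη : 0 < η) (hc : ∀ t z, c t z = -η * ⟪x t - z, g t⟫ + K)
    (hmeta : -L ≤ ∑ t ∈ s, c t (xc t)) (hexpert : ∑ t ∈ s, (c t (xc t) - c t y) ≤ R) :
    ∑ t ∈ s, ⟪x t - y, g t⟫ ≤ (L + R + #s * K) / η := by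
  have hsum : ∑ t ∈ s, c t y = -η * ∑ t ∈ s, ⟪x t - y, g t⟫ + #s * K := by
    simp only [hc, sum_add_distrib, ← mul_sum, sum_const, nsmul_eq_mul]
  rw [sum_sub_distrib] at hexpert
  rw [le_div_iff₀ hη]
  linarith

theorem maler_sqrtT_regret_general
    (d T : ℕ) (hT : 1 ≤ T)
    (G D : ℝ) (hG : 0 < G) (hD : 0 < D)
    (𝒟 : Set (EuclideanSpace ℝ (Fin d)))
    (f : ℕ → EuclideanSpace ℝ (Fin d) → ℝ)
    (hfconv : ∀ t ∈ Finset.Icc 1 T, ConvexOn ℝ Set.univ (f t))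
    (hfdiff : ∀ t ∈ Finset.Icc 1 T, ∀ y ∈ 𝒟, DifferentiableAt ℝ (f t) y)
    (x xc : ℕ → EuclideanSpace ℝ (Fin d)) (xstar : EuclideanSpace ℝ (Fin d))
    (hx : ∀ t ∈ Finset.Icc 1 T, x t ∈ 𝒟)
    (g : ℕ → EuclideanSpace ℝ (Fin d)) (hg : ∀ t, g t = gradient (f t) (x t))
    (ηc : ℝ) (hηc : ηc = 1 / (2 * G * D * Real.sqrt T))
    (c : ℕ → EuclideanSpace ℝ (Fin d) → ℝ)
    (hc : ∀ t y, c t y = -ηc * (inner ℝ (x t - y) (g t) : ℝ) + (ηc * G * D)^2)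
    (hmeta : (∑ t ∈ Finset.Icc 1 T, c t (xc t)) ≥ -Real.log 3)
    (hexpert : (∑ t ∈ Finset.Icc 1 T, (c t (xc t) - c t xstar)) ≤ 3 / 4) :
    (∑ t ∈ Finset.Icc 1 T, f t (x t)) - (∑ t ∈ Finset.Icc 1 T, f t xstar)
      ≤ 2 * (1 + Real.log 3) * G * D * Real.sqrt T := by
  have hsqrtT : 0 < Real.sqrt T := Real.sqrt_pos.mpr (by exact_mod_cast hT)
  have hη : 0 < ηc := by rw [hηc]; positivity
  have hstep : (T : ℝ) * (ηc * G * D) ^ 2 = 1 / 4 := by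
    rw [hηc]
    field_simp
    rw [Real.sq_sqrt (Nat.cast_nonneg T)]
    ring
  calc (∑ t ∈ Icc 1 T, f t (x t)) - ∑ t ∈ Icc 1 T, f t xstar
      = ∑ t ∈ Icc 1 T, (f t (x t) - f t xstar) := (sum_sub_distrib ..).symm
    _ ≤ ∑ t ∈ Icc 1 T, ⟪x t - xstar, g t⟫ := by
      simpa only [hg] using sum_sub_le_sum_inner_gradient hfconv
        (fun t ht => hfdiff t ht (x t) (hx t ht)) xstar
    _ ≤ (Real.log 3 + 3 / 4 + #(Icc 1 T) * (ηc * G * D) ^ 2) / ηc :=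
      sum_inner_le_of_surrogate_regret hη hc hmeta hexpert
    _ = 2 * (1 + Real.log 3) * G * D * Real.sqrt T := by
      rw [Nat.card_Icc, Nat.add_sub_cancel, hstep, hηc]
      field_simp
      ring

theorem maler_sqrtT_regret
    (d T : ℕ) (hd : 1 ≤ d) (hT : 1 ≤ T)
    (G D : ℝ) (hG : 0 < G) (hD : 0 < D)
    (𝒟 : Set (EuclideanSpace ℝ (Fin d))) (hconv : Convex ℝ 𝒟)
    (hdiam : ∀ a ∈ 𝒟, ∀ b ∈ 𝒟, ‖a - b‖ ≤ D)
    (f : ℕ → EuclideanSpace ℝ (Fin d) → ℝ)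
    (hfconv : ∀ t ∈ Finset.Icc 1 T, ConvexOn ℝ Set.univ (f t))
    (hfdiff : ∀ t ∈ Finset.Icc 1 T, ∀ y ∈ 𝒟, DifferentiableAt ℝ (f t) y)
    (hgradbound : ∀ t ∈ Finset.Icc 1 T, ∀ y ∈ 𝒟, ‖gradient (f t) y‖ ≤ G)
    (x xc : ℕ → EuclideanSpace ℝ (Fin d)) (xstar : EuclideanSpace ℝ (Fin d))
    (hx : ∀ t ∈ Finset.Icc 1 T, x t ∈ 𝒟)
    (hxc : ∀ t ∈ Finset.Icc 1 T, xc t ∈ 𝒟)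
    (hxstar : xstar ∈ 𝒟)
    (g : ℕ → EuclideanSpace ℝ (Fin d)) (hg : ∀ t, g t = gradient (f t) (x t))
    (ηc : ℝ) (hηc : ηc = 1 / (2 * G * D * Real.sqrt T))
    (c : ℕ → EuclideanSpace ℝ (Fin d) → ℝ)
    (hc : ∀ t y, c t y = -ηc * (inner ℝ (x t - y) (g t) : ℝ) + (ηc * G * D)^2)
    (hmeta : (∑ t ∈ Finset.Icc 1 T, c t (xc t)) ≥ -Real.log 3)
    (hexpert : (∑ t ∈ Finset.Icc 1 T, (c t (xc t) - c t xstar)) ≤ 3 / 4) :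
    (∑ t ∈ Finset.Icc 1 T, f t (x t)) - (∑ t ∈ Finset.Icc 1 T, f t xstar)
      ≤ 2 * (1 + Real.log 3) * G * D * Real.sqrt T :=
  maler_sqrtT_regret_general d T hT G D hG hD 𝒟 f hfconv hfdiff x xc xstar hx g hg ηc hηc c hc hmeta
    hexpert
end

section
/- Let d ≥ 1, let G, D, λ > 0, let 𝒟 ⊆ ℝ^d be a convex set of diameter at most D, let f_1,…,f_T : ℝ^d → ℝ be differentiable and λ-strongly convex on 𝒟 (i.e., f_t(x₁) ≥ f_t(x₂) + ⟨∇f_t(x₂), x₁ − x₂⟩ + (λ/2)‖x₁ − x₂‖² for all x₁, x₂ ∈ 𝒟), let x_t, x* ∈ 𝒟, set g_t = ∇f_t(x_t) with ‖g_t‖ ≤ G, let A ≥ 0, and set V = G² Σ_{t=1}^T ‖x_t − x*‖². If Σ_{t=1}^T ⟨g_t, x_t − x*⟩ ≤ 3√(V·A) + 10GD·A, then Σ_{t=1}^T f_t(x_t) − Σ_{t=1}^T f_t(x*) ≤ (10GD + 9G²/(2λ)) A. -/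
/-!
Strong convexity at `x_t`, tested against `x*`, bounds each instantaneous regret by the linearized
one minus `(λ/2)‖x_t - x*‖²`. After summing, the AM–GM step splits `3√(V A)` into
`(λ/2) Σ ‖x_t - x*‖²`, which the strong-convexity gain cancels, and `9G²A/(2λ)`.
-/

open Finset

theorem Real.two_mul_sqrt_mul_le_add {a b γ : ℝ} (ha : 0 ≤ a) (hb : 0 ≤ b) (hγ : 0 < γ) :
    2 * √(a * b) ≤ γ * a + b / γ := by
  have hsplit : √(a * b) = √(γ * a) * √(b / γ) := by
    rw [← Real.sqrt_mul (by positivity)]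
    congr 1
    field_simp
  have hγa : √(γ * a) ^ 2 = γ * a := Real.sq_sqrt (by positivity)
  have hbγ : √(b / γ) ^ 2 = b / γ := Real.sq_sqrt (by positivity)
  calc 2 * √(a * b) = 2 * √(γ * a) * √(b / γ) := by rw [hsplit, mul_assoc]
    _ ≤ √(γ * a) ^ 2 + √(b / γ) ^ 2 := two_mul_le_add_sq _ _
    _ = γ * a + b / γ := by rw [hγa, hbγ]

section StronglyConvex

variable {E : Type*} [NormedAddCommGroup E] [InnerProductSpace ℝ E]

theorem sub_le_inner_sub_sub_of_strongConvex_ineq {f : E → ℝ} {x y g : E} {lam : ℝ}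
    (h : f y ≥ f x + inner ℝ g (y - x) + lam / 2 * ‖y - x‖ ^ 2) :
    f x - f y ≤ inner ℝ g (x - y) - lam / 2 * ‖x - y‖ ^ 2 := by
  rw [← neg_sub x y, inner_neg_right, norm_neg] at h
  linarith

theorem sum_sub_sum_le_sum_inner_sub_of_strongConvex {ι : Type*} (s : Finset ι)
    (f : ι → E → ℝ) (x g : ι → E) (y : E) (lam : ℝ)
    (h : ∀ t ∈ s, f t y ≥ f t (x t) + inner ℝ (g t) (y - x t) + lam / 2 * ‖y - x t‖ ^ 2) :
    (∑ t ∈ s, f t (x t)) - ∑ t ∈ s, f t y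
      ≤ (∑ t ∈ s, inner ℝ (g t) (x t - y)) - lam / 2 * ∑ t ∈ s, ‖x t - y‖ ^ 2 := by
  rw [← sum_sub_distrib, mul_sum, ← sum_sub_distrib]
  exact sum_le_sum fun t ht => sub_le_inner_sub_sub_of_strongConvex_ineq (h t ht)

end StronglyConvex

theorem maler_strongly_convex_corollary_general
    (d T : ℕ)
    (G D lam : ℝ) (hlam : 0 < lam)
    (𝒟 : Set (EuclideanSpace ℝ (Fin d)))
    (f : ℕ → EuclideanSpace ℝ (Fin d) → ℝ)
    (x : ℕ → EuclideanSpace ℝ (Fin d)) (xstar : EuclideanSpace ℝ (Fin d))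
    (hx : ∀ t ∈ Finset.Icc 1 T, x t ∈ 𝒟) (hxstar : xstar ∈ 𝒟)
    (g : ℕ → EuclideanSpace ℝ (Fin d))
    (hgrad : ∀ t ∈ Finset.Icc 1 T, HasGradientAt (f t) (g t) (x t))
    (hsc : ∀ t ∈ Finset.Icc 1 T, ∀ x₁ ∈ 𝒟, ∀ x₂ ∈ 𝒟, ∀ g₂ : EuclideanSpace ℝ (Fin d),
      HasGradientAt (f t) g₂ x₂ →
      f t x₁ ≥ f t x₂ + (inner ℝ g₂ (x₁ - x₂) : ℝ) + (lam / 2) * ‖x₁ - x₂‖^2)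
    (A V : ℝ) (hA : 0 ≤ A)
    (hV : V = G^2 * ∑ t ∈ Finset.Icc 1 T, ‖x t - xstar‖^2)
    (hbound : (∑ t ∈ Finset.Icc 1 T, (inner ℝ (g t) (x t - xstar) : ℝ))
        ≤ 3 * Real.sqrt (V * A) + 10 * G * D * A) :
    (∑ t ∈ Finset.Icc 1 T, f t (x t)) - (∑ t ∈ Finset.Icc 1 T, f t xstar)
      ≤ (10 * G * D + 9 * G^2 / (2 * lam)) * A := by
  set S := ∑ t ∈ Icc 1 T, ‖x t - xstar‖ ^ 2
  have hregret := sum_sub_sum_le_sum_inner_sub_of_strongConvex (Icc 1 T) f x g xstar lam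
    fun t ht => hsc t ht xstar hxstar (x t) (hx t ht) (g t) (hgrad t ht)
  -- AM–GM on `√(S · G²A)` with weight `λ/3`, i.e. the paper's `γ = λ/(3G²)` applied to `√(V · A)`.
  have hamgm : 2 * √(S * (G ^ 2 * A)) ≤ lam / 3 * S + G ^ 2 * A / (lam / 3) :=
    Real.two_mul_sqrt_mul_le_add (sum_nonneg fun _ _ => sq_nonneg _) (by positivity)
      (by positivity)
  have hVA : V * A = S * (G ^ 2 * A) := by rw [hV]; ring
  have hsplit : G ^ 2 * A / (lam / 3) = 2 / 3 * (9 * G ^ 2 / (2 * lam) * A) := by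
    field_simp; ring
  rw [hVA] at hbound
  linarith

theorem maler_strongly_convex_corollary
    (d T : ℕ) (hd : 1 ≤ d)
    (G D lam : ℝ) (hG : 0 < G) (hD : 0 < D) (hlam : 0 < lam)
    (𝒟 : Set (EuclideanSpace ℝ (Fin d))) (hconv : Convex ℝ 𝒟)
    (hdiam : ∀ a ∈ 𝒟, ∀ b ∈ 𝒟, ‖a - b‖ ≤ D)
    (f : ℕ → EuclideanSpace ℝ (Fin d) → ℝ)
    (x : ℕ → EuclideanSpace ℝ (Fin d)) (xstar : EuclideanSpace ℝ (Fin d))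
    (hx : ∀ t ∈ Finset.Icc 1 T, x t ∈ 𝒟) (hxstar : xstar ∈ 𝒟)
    (g : ℕ → EuclideanSpace ℝ (Fin d))
    (hgrad : ∀ t ∈ Finset.Icc 1 T, HasGradientAt (f t) (g t) (x t))
    (hsc : ∀ t ∈ Finset.Icc 1 T, ∀ x₁ ∈ 𝒟, ∀ x₂ ∈ 𝒟, ∀ g₂ : EuclideanSpace ℝ (Fin d),
      HasGradientAt (f t) g₂ x₂ →
      f t x₁ ≥ f t x₂ + (inner ℝ g₂ (x₁ - x₂) : ℝ) + (lam / 2) * ‖x₁ - x₂‖^2)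
    (hg : ∀ t ∈ Finset.Icc 1 T, ‖g t‖ ≤ G)
    (A V : ℝ) (hA : 0 ≤ A)
    (hV : V = G^2 * ∑ t ∈ Finset.Icc 1 T, ‖x t - xstar‖^2)
    (hbound : (∑ t ∈ Finset.Icc 1 T, (inner ℝ (g t) (x t - xstar) : ℝ))
        ≤ 3 * Real.sqrt (V * A) + 10 * G * D * A) :
    (∑ t ∈ Finset.Icc 1 T, f t (x t)) - (∑ t ∈ Finset.Icc 1 T, f t xstar)
      ≤ (10 * G * D + 9 * G^2 / (2 * lam)) * A :=
  maler_strongly_convex_corollary_general d T G D lam hlam 𝒟 f x xstar hx hxstar g hgrad hsc A V hA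
    hV hbound
end

section
/- Let d ≥ 1, let G, D, β > 0, let 𝒟 ⊆ ℝ^d be a convex set of diameter at most D, let f_1,…,f_T : ℝ^d → ℝ be differentiable, let x_t, x* ∈ 𝒟, set g_t = ∇f_t(x_t) with ‖g_t‖ ≤ G, and suppose for each t: f_t(x*) ≥ f_t(x_t) + ⟨g_t, x* − x_t⟩ + (β/2)⟨g_t, x* − x_t⟩². Let B ≥ 0 and set V = Σ_{t=1}^T ⟨g_t, x_t − x*⟩². If Σ_{t=1}^T ⟨g_t, x_t − x*⟩ ≤ 3√(V·B) + 10GD·B, then Σ_{t=1}^T f_t(x_t) − Σ_{t=1}^T f_t(x*) ≤ (10GD + 9/(2β)) B. -/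
/-!
Each exp-concave loss sits above its tangent plus a quadratic in the instantaneous regret
`r_t = ⟪g_t, x_t - x*⟫`, so the regret is at most `∑ r_t - (β/2) V`. Splitting the
`3 √(V B)` term of the data-dependent bound by AM–GM at scale `γ = β/3` produces exactly
`(β/2) V`, which cancels, leaving `(10 G D + 9/(2β)) B`.
-/

open Real

lemma Real.sqrt_mul_le_mul_add_div {c x y : ℝ} (hc : 0 < c) (hx : 0 ≤ x) (hy : 0 ≤ y) :
    √(x * y) ≤ c / 2 * x + y / (2 * c) := by
  have hsplit : √(x * y) = √(c * x) * √(y / c) := by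
    rw [← sqrt_mul (by positivity)]
    congr 1
    field_simp
  have hamgm := two_mul_le_add_sq (√(c * x)) (√(y / c))
  rw [sq_sqrt (by positivity), sq_sqrt (by positivity)] at hamgm
  calc √(x * y) = √(c * x) * √(y / c) := hsplit
    _ ≤ (c * x + y / c) / 2 := by linarith
    _ = c / 2 * x + y / (2 * c) := by ring

lemma sub_le_inner_sub_sq_of_le
    {E : Type*} [NormedAddCommGroup E] [InnerProductSpace ℝ E]
    {a b β : ℝ} {g x u : E}
    (h : b ≥ a + inner ℝ g (u - x) + β / 2 * inner ℝ g (u - x) ^ 2) :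
    a - b ≤ inner ℝ g (x - u) - β / 2 * inner ℝ g (x - u) ^ 2 := by
  rw [← neg_sub x u, inner_neg_right, neg_sq] at h
  linarith

theorem maler_expConcave_corollary_general
    (d T : ℕ)
    (G D β : ℝ) (hβ : 0 < β)
    (f : ℕ → EuclideanSpace ℝ (Fin d) → ℝ)
    (x : ℕ → EuclideanSpace ℝ (Fin d)) (xstar : EuclideanSpace ℝ (Fin d))
    (g : ℕ → EuclideanSpace ℝ (Fin d))
    (hquad : ∀ t ∈ Finset.Icc 1 T,
      f t xstar ≥ f t (x t) + (inner ℝ (g t) (xstar - x t) : ℝ)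
        + (β / 2) * (inner ℝ (g t) (xstar - x t) : ℝ)^2)
    (B V : ℝ) (hB : 0 ≤ B)
    (hV : V = ∑ t ∈ Finset.Icc 1 T, (inner ℝ (g t) (x t - xstar) : ℝ)^2)
    (hbound : (∑ t ∈ Finset.Icc 1 T, (inner ℝ (g t) (x t - xstar) : ℝ))
        ≤ 3 * Real.sqrt (V * B) + 10 * G * D * B) :
    (∑ t ∈ Finset.Icc 1 T, f t (x t)) - (∑ t ∈ Finset.Icc 1 T, f t xstar)
      ≤ (10 * G * D + 9 / (2 * β)) * B := by
  have hregret : (∑ t ∈ Finset.Icc 1 T, f t (x t)) - (∑ t ∈ Finset.Icc 1 T, f t xstar)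
      ≤ (∑ t ∈ Finset.Icc 1 T, (inner ℝ (g t) (x t - xstar) : ℝ)) - β / 2 * V := by
    rw [hV, Finset.mul_sum, ← Finset.sum_sub_distrib, ← Finset.sum_sub_distrib]
    exact Finset.sum_le_sum fun t ht => sub_le_inner_sub_sq_of_le (hquad t ht)
  have hV0 : 0 ≤ V := hV ▸ Finset.sum_nonneg fun t _ => sq_nonneg _
  have hamgm : 3 * √(V * B) ≤ β / 2 * V + 9 / (2 * β) * B := by
    have h := sqrt_mul_le_mul_add_div (c := β / 3) (by positivity) hV0 hB
    have hscale : 3 * (β / 3 / 2 * V + B / (2 * (β / 3))) = β / 2 * V + 9 / (2 * β) * B := by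
      field_simp
      ring
    linarith
  linarith

theorem maler_expConcave_corollary
    (d T : ℕ) (hd : 1 ≤ d)
    (G D β : ℝ) (hG : 0 < G) (hD : 0 < D) (hβ : 0 < β)
    (𝒟 : Set (EuclideanSpace ℝ (Fin d))) (hconv : Convex ℝ 𝒟)
    (hdiam : ∀ a ∈ 𝒟, ∀ b ∈ 𝒟, ‖a - b‖ ≤ D)
    (f : ℕ → EuclideanSpace ℝ (Fin d) → ℝ)
    (x : ℕ → EuclideanSpace ℝ (Fin d)) (xstar : EuclideanSpace ℝ (Fin d))
    (hx : ∀ t ∈ Finset.Icc 1 T, x t ∈ 𝒟) (hxstar : xstar ∈ 𝒟)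
    (g : ℕ → EuclideanSpace ℝ (Fin d))
    (hgrad : ∀ t ∈ Finset.Icc 1 T, HasGradientAt (f t) (g t) (x t))
    (hg : ∀ t ∈ Finset.Icc 1 T, ‖g t‖ ≤ G)
    (hquad : ∀ t ∈ Finset.Icc 1 T,
      f t xstar ≥ f t (x t) + (inner ℝ (g t) (xstar - x t) : ℝ)
        + (β / 2) * (inner ℝ (g t) (xstar - x t) : ℝ)^2)
    (B V : ℝ) (hB : 0 ≤ B)
    (hV : V = ∑ t ∈ Finset.Icc 1 T, (inner ℝ (g t) (x t - xstar) : ℝ)^2)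
    (hbound : (∑ t ∈ Finset.Icc 1 T, (inner ℝ (g t) (x t - xstar) : ℝ))
        ≤ 3 * Real.sqrt (V * B) + 10 * G * D * B) :
    (∑ t ∈ Finset.Icc 1 T, f t (x t)) - (∑ t ∈ Finset.Icc 1 T, f t xstar)
      ≤ (10 * G * D + 9 / (2 * β)) * B :=
  maler_expConcave_corollary_general d T G D β hβ f x xstar g hquad B V hB hV hbound
end
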